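/- The reduction relation on normalized state formulas is terminating: there is no infinite sequence S₀ ⟶ S₁ ⟶ S₂ ⟶ ⋯ of reduction steps, where each step either decomposes a guard (f s₁ ⋯ s_k) = (f t₁ ⋯ t_k) into the k argument guards, eliminates a universally quantified variable y via a guard y = t (y not a rigid subterm of t) by substitution, or replaces a guarded goal by ⊤ when a guard y = t has y a rigid subterm of t. -/

import Mathlib

/-- Terms: de Bruijn universal variables, constants applied to arguments,
    and existential (logic) variables applied to arguments. -/
inductive Tm : Type where
  | var : Nat → Tm
  | app : Nat → List Tm → Tm
  | evar : Nat → List Tm → Tm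

namespace Tm

/-- Substitution for the universal variables. -/
def subst (σ : Nat → Tm) : Tm → Tm
  | var n => σ n
  | app f ts => app f (ts.attach.map (fun t => subst σ t.1))
  | evar e ts => evar e (ts.attach.map (fun t => subst σ t.1))
  decreasing_by all_goals (have := List.sizeOf_lt_of_mem t.2; simp at this ⊢; omega)

/-- A term with no existential variables. -/
inductive NoEvar : Tm → Prop where
  | var : NoEvar (var n)
  | app : (∀ t ∈ ts, NoEvar t) → NoEvar (app f ts)

/-- The existential variable `e` occurs in the term. -/
inductive EvOcc (e : Nat) : Tm → Prop where
  | here : ∀ {ts}, EvOcc e (evar e ts)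
  | app : ∀ {f ts t}, t ∈ ts → EvOcc e t → EvOcc e (app f ts)
  | evar : ∀ {x ts t}, t ∈ ts → EvOcc e t → EvOcc e (evar x ts)

/-- Apply a λ-abstraction body (parameters = de Bruijn variables) to a list
    of arguments. -/
def applyBody (b : Tm) (args : List Tm) : Tm :=
  b.subst (fun i => args.getD i (.app 0 []))

/-- Instantiate the existential variables using the bodies `θ`. -/
def inst (θ : Nat → Tm) : Tm → Tm
  | var n => var n
  | app f ts => app f (ts.attach.map (fun t => inst θ t.1))
  | evar e ts => applyBody (θ e) (ts.attach.map (fun t => inst θ t.1))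
  decreasing_by all_goals (have := List.sizeOf_lt_of_mem t.2; simp at this ⊢; omega)

/-- Apply a partial substitution for existential variables. -/
def instO (ρ : Nat → Option Tm) : Tm → Tm
  | var n => var n
  | app f ts => app f (ts.attach.map (fun t => instO ρ t.1))
  | evar e ts =>
      match ρ e with
      | some b => applyBody b (ts.attach.map (fun t => instO ρ t.1))
      | none => evar e (ts.attach.map (fun t => instO ρ t.1))
  decreasing_by all_goals (have := List.sizeOf_lt_of_mem t.2; simp at this ⊢; omega)

end Tm

/-- Composition of a partial existential substitution with a solution. -/
def compSub (ρ : Nat → Option Tm) (θ : Nat → Tm) : Nat → Tm :=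
  fun n => match ρ n with
  | some b => b.inst θ
  | none => θ n

/-- Targets of guarded goals: an equality, ⊥, or an atom. -/
inductive Tgt : Type where
  | eq : Tm → Tm → Tgt
  | bot : Tgt
  | atom : Nat → List Tm → Tgt

def Tgt.map (F : Tm → Tm) : Tgt → Tgt
  | eq s t => eq (F s) (F t)
  | bot => bot
  | atom p ts => atom p (ts.map F)

/-- A guarded goal `∀ȳ.(u₁ = v₁ → ⋯ → uₘ = vₘ → B)`: `univ` universal
    variables, a list of guards, and a target. -/
structure GGoal : Type where
  univ : Nat
  guards : List (Tm × Tm)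
  target : Tgt

def GGoal.map (F : Tm → Tm) (g : GGoal) : GGoal :=
  ⟨g.univ, g.guards.map (fun q => (F q.1, F q.2)), g.target.map F⟩

/-- A state formula `∃h̄.(G₁ ∧ ⋯ ∧ Gₙ)`: the existential variables `h̄` are
    left implicit, the conjuncts are the guarded goals. -/
abbrev StateF := List GGoal

/-- The existential variable `e` occurs in the state. -/
def EvOccS (e : Nat) (S : StateF) : Prop :=
  ∃ g ∈ S, (∃ q ∈ g.guards, Tm.EvOcc e q.1 ∨ Tm.EvOcc e q.2) ∨
    (match g.target with
     | .eq s t => Tm.EvOcc e s ∨ Tm.EvOcc e t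
     | .bot => False
     | .atom _ ts => ∃ t ∈ ts, Tm.EvOcc e t)

/-- A guarded goal holds under an interpretation `A` of the atoms and an
    instantiation `θ` of the existential variables: for every substitution of
    (evar-free) terms for the universal variables that unifies all the guards,
    the corresponding instance of the target holds, with equality read as
    syntactic equality of terms (this is provability in intuitionistic logic
    with the left and right equality rules, for this fragment). -/
def GoalHolds (A : Nat → List Tm → Prop) (θ : Nat → Tm) (g : GGoal) : Prop :=
  ∀ σ : Nat → Tm, (∀ n, (σ n).NoEvar) →
    (∀ q ∈ g.guards, Tm.subst σ (Tm.inst θ q.1) = Tm.subst σ (Tm.inst θ q.2)) →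
    match g.target with
    | .eq u v => Tm.subst σ (Tm.inst θ u) = Tm.subst σ (Tm.inst θ v)
    | .bot => False
    | .atom p ts => A p (ts.map (fun t => Tm.subst σ (Tm.inst θ t)))

/-- A definite clause `∀ū.(G → p s̄)`: the clause-local existential
    variables `ū` appear as evars in `args` and `body`. -/
structure Clause : Type where
  pred : Nat
  args : List Tm
  body : List GGoal

abbrev Program := List Clause

/-- An interpretation `A` of the atoms satisfies a clause. -/
def ClauseHolds (A : Nat → List Tm → Prop) (c : Clause) : Prop :=
  ∀ θ : Nat → Tm, (∀ n, (θ n).NoEvar) →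
    (∀ g ∈ c.body, GoalHolds A θ g) →
    ∀ σ : Nat → Tm, (∀ n, (σ n).NoEvar) →
      A c.pred (c.args.map (fun t => Tm.subst σ (Tm.inst θ t)))

/-- `A` is a model of the program `P`. -/
def Model (A : Nat → List Tm → Prop) (P : Program) : Prop :=
  ∀ c ∈ P, ClauseHolds A c

/-- `θ` is a solution for the state `S` under the program `P`: instantiating
    the existential variables by (evar-free) bodies `θ` makes every guarded
    goal provable, atoms being interpreted in any model of `P`. -/
def Sol (P : Program) (S : StateF) (θ : Nat → Tm) : Prop :=
  (∀ n, (θ n).NoEvar) ∧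
  ∀ A : Nat → List Tm → Prop, Model A P → ∀ g ∈ S, GoalHolds A θ g

/-- `s` is an immediate rigid subterm of `t` (argument of a constant head). -/
inductive RSub : Tm → Tm → Prop where
  | mk : ∀ {s f ts}, s ∈ ts → RSub s (.app f ts)

/-- `s` is a rigid subterm of `t`. -/
def RigidSub (s t : Tm) : Prop := Relation.TransGen RSub s t

/-- The substitution eliminating universal variable `y` in favour of `t`:
    `y` is replaced by `t` and the remaining variables are renumbered. -/
def elimSub (y : Nat) (t : Tm) : Nat → Tm :=
  fun k => if k = y then t.subst (fun j => .var (if y < j then j - 1 else j))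
           else .var (if y < k then k - 1 else k)

/-- One step of reduction of normalized state formulas:
    decomposition of a guard with equal constant heads, elimination of a
    universal variable through a guard `y = t` (or `t = y`) with `y` not a
    rigid subterm of `t`, and the occurs check replacing a guarded goal by ⊤
    (i.e., deleting it) when `y` is a rigid subterm of `t`. -/
inductive Red : StateF → StateF → Prop where
  | dec : ∀ {S₁ S₂ : StateF} {m f Q₁ Q₂ B} {ts ss : List Tm},
      ts.length = ss.length →
      Red (S₁ ++ ⟨m, Q₁ ++ (.app f ts, .app f ss) :: Q₂, B⟩ :: S₂)
          (S₁ ++ ⟨m, Q₁ ++ ts.zip ss ++ Q₂, B⟩ :: S₂)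
  | elimL : ∀ {S₁ S₂ : StateF} {m y t Q₁ Q₂ B},
      y < m → ¬ RigidSub (.var y) t →
      Red (S₁ ++ ⟨m, Q₁ ++ (.var y, t) :: Q₂, B⟩ :: S₂)
          (S₁ ++ GGoal.map (Tm.subst (elimSub y t)) ⟨m - 1, Q₁ ++ Q₂, B⟩ :: S₂)
  | elimR : ∀ {S₁ S₂ : StateF} {m y t Q₁ Q₂ B},
      y < m → ¬ RigidSub (.var y) t →
      Red (S₁ ++ ⟨m, Q₁ ++ (t, .var y) :: Q₂, B⟩ :: S₂)
          (S₁ ++ GGoal.map (Tm.subst (elimSub y t)) ⟨m - 1, Q₁ ++ Q₂, B⟩ :: S₂)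
  | occL : ∀ {S₁ S₂ : StateF} {m y t Q₁ Q₂ B},
      y < m → RigidSub (.var y) t →
      Red (S₁ ++ ⟨m, Q₁ ++ (.var y, t) :: Q₂, B⟩ :: S₂) (S₁ ++ S₂)
  | occR : ∀ {S₁ S₂ : StateF} {m y t Q₁ Q₂ B},
      y < m → RigidSub (.var y) t →
      Red (S₁ ++ ⟨m, Q₁ ++ (t, .var y) :: Q₂, B⟩ :: S₂) (S₁ ++ S₂)

/-!
Rank a guarded goal by the number of its universal variables and the total size of its guards,
ordered lexicographically. Decomposition keeps the variables and shrinks the guards, variable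
elimination removes a variable (however much the substitution enlarges the guards), and the
occurs check deletes the goal. So every step makes the multiset of ranks of the state smaller
in the Dershowitz–Manna order, which is well founded.
-/

namespace Tm

def size : Tm → ℕ
  | var _ => 1
  | app _ ts => 1 + (ts.map size).sum
  | evar _ ts => 1 + (ts.map size).sum

end Tm

def guardSize (Q : List (Tm × Tm)) : ℕ := (Q.map fun q => q.1.size + q.2.size).sum

theorem guardSize_zip {ts ss : List Tm} (h : ts.length = ss.length) :
    guardSize (ts.zip ss) = (ts.map Tm.size).sum + (ss.map Tm.size).sum := by
  have hfst : (ts.zip ss).map (Tm.size ∘ Prod.fst) = ts.map Tm.size := by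
    rw [← List.map_map, List.map_fst_zip h.le]
  have hsnd : (ts.zip ss).map (Tm.size ∘ Prod.snd) = ss.map Tm.size := by
    rw [← List.map_map, List.map_snd_zip h.ge]
  rw [← hfst, ← hsnd]
  exact List.sum_map_add

theorem guardSize_decompose_lt (f : Nat) {ts ss : List Tm} (h : ts.length = ss.length)
    (Q₁ Q₂ : List (Tm × Tm)) :
    guardSize (Q₁ ++ ts.zip ss ++ Q₂) < guardSize (Q₁ ++ (.app f ts, .app f ss) :: Q₂) := by
  have hzip := guardSize_zip h
  simp only [guardSize, List.map_append, List.sum_append, List.map_cons, List.sum_cons,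
    Tm.size] at hzip ⊢
  omega

def GGoal.rank (g : GGoal) : ℕ ×ₗ ℕ := toLex (g.univ, guardSize g.guards)

def stateRank (S : StateF) : Multiset (ℕ ×ₗ ℕ) := S.map GGoal.rank

theorem stateRank_middle (S₁ S₂ : StateF) (g : GGoal) :
    stateRank (S₁ ++ g :: S₂) = g.rank ::ₘ stateRank (S₁ ++ S₂) := by
  simp only [stateRank, Multiset.cons_coe, Multiset.coe_eq_coe, ← List.map_cons]
  exact List.perm_middle.map _

namespace Multiset

variable {α : Type*} [Preorder α]

theorem isDershowitzMannaLT_cons_of_lt {a b : α} (X : Multiset α) (h : a < b) :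
    IsDershowitzMannaLT (a ::ₘ X) (b ::ₘ X) :=
  ⟨X, {a}, {b}, by simp, by rw [add_comm, singleton_add], by rw [add_comm, singleton_add],
    by simpa using h⟩

theorem isDershowitzMannaLT_cons_self (a : α) (X : Multiset α) :
    IsDershowitzMannaLT X (a ::ₘ X) :=
  ⟨X, 0, {a}, by simp, by simp, by rw [add_comm, singleton_add], by simp⟩

end Multiset

theorem Red.stateRank_lt {S T : StateF} (h : Red S T) :
    (stateRank T).IsDershowitzMannaLT (stateRank S) := by
  cases h with
  | dec hlen =>
    rw [stateRank_middle, stateRank_middle]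
    exact Multiset.isDershowitzMannaLT_cons_of_lt _
      (Prod.Lex.toLex_lt_toLex.2 (.inr ⟨rfl, guardSize_decompose_lt _ hlen _ _⟩))
  | elimL hy | elimR hy =>
    rw [stateRank_middle, stateRank_middle]
    exact Multiset.isDershowitzMannaLT_cons_of_lt _
      (Prod.Lex.toLex_lt_toLex.2 (.inl (Nat.sub_one_lt_of_lt hy)))
  | occL | occR =>
    rw [stateRank_middle]
    exact Multiset.isDershowitzMannaLT_cons_self _ _

/-- the reduction relation on normalized state formulas is
    terminating: there is no infinite sequence `S₀ ⟶ S₁ ⟶ S₂ ⟶ ⋯` of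
    reduction steps. -/
theorem reduction_terminates :
    ∀ f : Nat → StateF, ¬ ∀ i, Red (f i) (f (i + 1)) := fun f hf =>
  (wellFounded_iff_isEmpty_descending_chain.1 Multiset.wellFounded_isDershowitzMannaLT).elim
    ⟨fun i => stateRank (f i), fun i => (hf i).stateRank_lt⟩
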